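/- A set of conditionals S is closed under Cut (if A ∧ B ⇒ C ∈ S and A ⇒ B ∈ S then A ⇒ C ∈ S) if and only if S can be characterised by a conditional interpretation I = (f, g) satisfying: (1) whenever I ⊩ A ⇒ B, f(A) ⪯ f(A ∧ B) in the Smyth order; and (2) if A ∈ g(B) and A ∧ B ∈ g(C) then A ∈ g(C). -/
import Mathlib


inductive Fml (n : ℕ) : Type
  | bot : Fml n
  | var : Fin n → Fml n
  | neg : Fml n → Fml n
  | and : Fml n → Fml n → Fml n
  | or  : Fml n → Fml n → Fml n
  | imp : Fml n → Fml n → Fml n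

def Fml.eval {n : ℕ} (v : Fin n → Bool) : Fml n → Bool
  | .bot => false
  | .var i => v i
  | .neg a => !(a.eval v)
  | .and a b => a.eval v && b.eval v
  | .or a b => a.eval v || b.eval v
  | .imp a b => !(a.eval v) || b.eval v

/-- A ≤ B : the implication A → B is a classical tautology. -/
def Fml.Le {n : ℕ} (A B : Fml n) : Prop :=
  ∀ v : Fin n → Bool, A.eval v = true → B.eval v = true

/-- Logical equivalence. -/
def Fml.Equiv {n : ℕ} (A B : Fml n) : Prop := A.Le B ∧ B.Le A

/-- Strict entailment. -/
def Fml.Lt {n : ℕ} (A B : Fml n) : Prop := A.Le B ∧ ¬ B.Le A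

/-- ≤-minimal elements of a set of formulas. -/
def minLe {n : ℕ} (𝒜 : Set (Fml n)) : Set (Fml n) :=
  {B ∈ 𝒜 | ¬ ∃ C ∈ 𝒜, C.Lt B}

/-- Upward closure 𝒜↑. -/
def upSet {n : ℕ} (𝒜 : Set (Fml n)) : Set (Fml n) :=
  {B | ∃ A ∈ 𝒜, A.Le B}

/-- Smyth order on sets of formulas. -/
def Smyth {n : ℕ} (𝒜 ℬ : Set (Fml n)) : Prop :=
  ∀ B ∈ ℬ, ∃ A ∈ 𝒜, A.Le B

/-- Satisfaction of a conditional A ⇒ B by an interpretation (f, g). -/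
def Sat {n : ℕ} (f g : Fml n → Set (Fml n)) (A B : Fml n) : Prop :=
  (∃ B' ∈ f A, B'.Le B) ∧ A ∈ g B

/-- (f, g) characterises S: S is exactly the set of satisfied conditionals. -/
def Characterises {n : ℕ} (f g : Fml n → Set (Fml n)) (S : Set (Fml n × Fml n)) : Prop :=
  ∀ A B : Fml n, (A, B) ∈ S ↔ Sat f g A B

/-- measure: number of satisfying valuations -/
def fmlCard {n : ℕ} (A : Fml n) : ℕ :=
  (Finset.univ.filter (fun v : Fin n → Bool => A.eval v = true)).card

lemma lt_card {n : ℕ} {A B : Fml n} (h : A.Lt B) : fmlCard A < fmlCard B := by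
  apply Finset.card_lt_card
  constructor
  · intro v hv
    simp only [Finset.mem_filter, Finset.mem_univ, true_and] at hv ⊢
    exact h.1 v hv
  · intro hsub
    apply h.2
    intro v hv
    have := hsub (by simp [hv] : v ∈ Finset.univ.filter (fun v => B.eval v = true))
    simpa using this

lemma exists_min {n : ℕ} (𝒜 : Set (Fml n)) :
    ∀ B ∈ 𝒜, ∃ B' ∈ minLe 𝒜, B'.Le B := by
  suffices h : ∀ k, ∀ B ∈ 𝒜, fmlCard B = k → ∃ B' ∈ minLe 𝒜, B'.Le B by
    intro B hB; exact h _ B hB rfl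
  intro k
  induction k using Nat.strong_induction_on with
  | _ k ih =>
    intro B hB hk
    by_cases hmin : ∃ C ∈ 𝒜, C.Lt B
    · obtain ⟨C, hC, hCB⟩ := hmin
      obtain ⟨B', hB', hle⟩ := ih (fmlCard C) (hk ▸ lt_card hCB) C hC rfl
      exact ⟨B', hB', fun v hv => hCB.1 v (hle v hv)⟩
    · exact ⟨B, ⟨hB, hmin⟩, fun v hv => hv⟩

theorem cut_characterisation (n : ℕ) (S : Set (Fml n × Fml n)) :
    (∀ A B C : Fml n, (A.and B, C) ∈ S → (A, B) ∈ S → (A, C) ∈ S) ↔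
      ∃ f g : Fml n → Set (Fml n), Characterises f g S ∧
        (∀ A B : Fml n, Sat f g A B → Smyth (f A) (f (A.and B))) ∧
        (∀ A B C : Fml n, A ∈ g B → A.and B ∈ g C → A ∈ g C) := by
  constructor
  · intro hcut
    refine ⟨fun A => minLe {C | (A, C) ∈ S}, fun B => {A | (A, B) ∈ S}, ?_, ?_, ?_⟩
    · intro A B
      constructor
      · intro h
        obtain ⟨B', hB', hle⟩ := exists_min {C | (A, C) ∈ S} B h
        exact ⟨⟨B', hB', hle⟩, h⟩
      · intro h; exact h.2
    · intro A B hSat C hC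
      have hAB : (A, B) ∈ S := hSat.2
      have hAC : (A, C) ∈ S := hcut A B C hC.1 hAB
      exact exists_min {D | (A, D) ∈ S} C hAC
    · intro A B C h1 h2; exact hcut A B C h2 h1
  · rintro ⟨f, g, hchar, h1, h2⟩ A B C hABC hAB
    rw [hchar] at hABC hAB ⊢
    refine ⟨?_, h2 A B C hAB.2 hABC.2⟩
    obtain ⟨C', hC', hle⟩ := hABC.1
    obtain ⟨A', hA', hle'⟩ := h1 A B hAB C' hC'
    exact ⟨A', hA', fun v hv => hle v (hle' v hv)⟩
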